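/- There is an absolute constant c > 0 such that for every binary search tree T on n nodes, there exists a sequence of at most c·n rotations starting from T such that: (i) every rotation in the sequence involves only nodes at depth at most 3 in the current tree; and (ii) every node of T becomes the root of the current tree at some point during the sequence. -/

import Mathlib

/-- A rooted tree (or the empty tree) on a subset `supp` of the vertex type `V`,
represented by parent pointers. -/
structure RTree (V : Type) where
  supp : Finset V
  parent : V → Option V
  parent_eq_none : ∀ v ∉ supp, parent v = none
  mem_of_parent : ∀ {v w : V}, parent v = some w → v ∈ supp ∧ w ∈ supp
  root_unique : ∀ v ∈ supp, ∀ w ∈ supp, parent v = none → parent w = none → v = w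
  reaches_root : ∀ v ∈ supp, ∃ r ∈ supp, parent r = none ∧
    Relation.ReflTransGen (fun a b => parent a = some b) v r

namespace RTree

variable {V : Type}

/-- `T.Anc a v` : `a` is an ancestor of `v` in `T` (possibly `a = v`). -/
def Anc (T : RTree V) (a v : V) : Prop :=
  Relation.ReflTransGen (fun x y => T.parent x = some y) v a

/-- `a` is a strict ancestor of `v`. -/
def StrictAnc (T : RTree V) (a v : V) : Prop := a ≠ v ∧ T.Anc a v

/-- The set of vertices of the subtree rooted at `a` (the descendants of `a`). -/
def descSet (T : RTree V) (a : V) : Set V := {v | T.Anc a v}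

/-- The depth of a node: the number of nodes on the path from the root to it
(the root has depth 1). -/
noncomputable def depth (T : RTree V) (v : V) : ℕ := Set.ncard {a | T.Anc a v}

def IsRoot (T : RTree V) (r : V) : Prop := r ∈ T.supp ∧ T.parent r = none

end RTree

/-- The restriction of a graph to a set of vertices (keeping the ambient vertex type). -/
def restrictG {V : Type} (G : SimpleGraph V) (U : Set V) : SimpleGraph V where
  Adj a b := G.Adj a b ∧ a ∈ U ∧ b ∈ U
  symm := ⟨fun a b ⟨h, ha, hb⟩ => ⟨h.symm, hb, ha⟩⟩
  loopless := ⟨fun a ⟨h, _, _⟩ => h.ne rfl⟩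

/-- `T` is a search tree on the induced subgraph `G[U]`: its nodes are the vertices of `U`,
the subtree of every node induces a connected subgraph, and every edge of `G[U]` joins
two comparable nodes of `T`. -/
def IsSTGOn {V : Type} (G : SimpleGraph V) (U : Finset V) (T : RTree V) : Prop :=
  T.supp = U ∧
  (∀ v ∈ U, ((restrictG G ↑U).induce (T.descSet v)).Connected) ∧
  (∀ u v : V, u ∈ U → v ∈ U → G.Adj u v → T.Anc u v ∨ T.Anc v u)

/-- `T` is a search tree on the graph `G`. -/
def IsSTG {V : Type} [Fintype V] (G : SimpleGraph V) (T : RTree V) : Prop :=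
  IsSTGOn G Finset.univ T

/-- `T'` is obtained from `T` by rotating the edge `(p, c)` of `T`, where `p` is
the parent of `c`: `c` replaces `p` (becoming a child of `p`'s former parent, or the
root if `p` was the root), `p` becomes a child of `c`, `p` keeps its other children,
and each child `x` of `c` whose subtree contains a vertex of `G` adjacent to `p`
becomes a child of `p` (the other children of `c` stay children of `c`). -/
def IsRotationAt {V : Type} (G : SimpleGraph V) (T T' : RTree V) (p c : V) : Prop :=
  T.parent c = some p ∧
  T'.supp = T.supp ∧
  T'.parent c = T.parent p ∧
  T'.parent p = some c ∧
  (∀ x : V, x ≠ p → T.parent x = some c →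
    ((∃ u ∈ T.descSet x, G.Adj u p) → T'.parent x = some p) ∧
    (¬(∃ u ∈ T.descSet x, G.Adj u p) → T'.parent x = some c)) ∧
  (∀ x : V, x ≠ c → x ≠ p → T.parent x ≠ some c → T'.parent x = T.parent x)

/-- `T'` is obtained from `T` by a single rotation. -/
def IsRotation {V : Type} (G : SimpleGraph V) (T T' : RTree V) : Prop :=
  ∃ p c, IsRotationAt G T T' p c

/-- `T2` can be obtained from `T1` by exactly `k` rotations. -/
def ReachesIn {V : Type} (G : SimpleGraph V) : ℕ → RTree V → RTree V → Prop
  | 0, T1, T2 => T1 = T2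
  | k+1, T1, T2 => ∃ T', IsRotation G T1 T' ∧ ReachesIn G k T' T2

/-- Vertex type of the caterpillar `C(m_1, …, m_n)`: spine vertices `inl i` and
leg vertices `inr ⟨i, j⟩`. -/
abbrev CatV (n : ℕ) (m : Fin n → ℕ) : Type := Fin n ⊕ (Σ i : Fin n, Fin (m i))

/-- The caterpillar tree `C(m_1, …, m_n)`: the spine `s_1 - s_2 - ⋯ - s_n` is a path,
and leg `ℓ_{i,j}` is adjacent to `s_i`. -/
def caterpillar (n : ℕ) (m : Fin n → ℕ) : SimpleGraph (CatV n m) where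
  Adj x y :=
    match x, y with
    | Sum.inl i, Sum.inl j => i.val + 1 = j.val ∨ j.val + 1 = i.val
    | Sum.inl i, Sum.inr l => l.1 = i
    | Sum.inr l, Sum.inl i => l.1 = i
    | Sum.inr _, Sum.inr _ => False
  symm := ⟨by rintro (i | l) (j | l') h <;> simp_all <;> tauto⟩
  loopless := ⟨by rintro (i | l) h <;> simp_all⟩

/-- The (base 2) Shannon entropy `H(m_1, …, m_n) = ∑_{i : m_i > 0} (m_i/m) log (m/m_i)`. -/
noncomputable def shannonH {n : ℕ} (m : Fin n → ℕ) : ℝ :=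
  ∑ i, if 0 < m i then
    ((m i : ℝ) / (∑ j, (m j : ℝ))) * Real.logb 2 ((∑ j, (m j : ℝ)) / (m i : ℝ))
  else 0

/-- The parent function of the search tree `A(S, π)` on the caterpillar: the legs form a
path at the top of the tree, ordered bottom-to-top according to `π`, and the spine nodes
hang below, arranged according to the BST `S`. -/
def AParent {n : ℕ} {m : Fin n → ℕ} (S : RTree (Fin n))
    (π : Fin (∑ i, m i) ≃ (Σ i : Fin n, Fin (m i))) :
    CatV n m → Option (CatV n m) :=
  fun x => match x with
  | Sum.inl i =>
      match S.parent i with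
      | some j => some (Sum.inl j)
      | none => if h : 0 < ∑ i, m i then some (Sum.inr (π ⟨0, h⟩)) else none
  | Sum.inr l =>
      if h : (π.symm l).val + 1 < ∑ i, m i then
        some (Sum.inr (π ⟨(π.symm l).val + 1, h⟩))
      else none

/-- `T = A(S, π)`. -/
def IsA {n : ℕ} {m : Fin n → ℕ} (S : RTree (Fin n))
    (π : Fin (∑ i, m i) ≃ (Σ i : Fin n, Fin (m i))) (T : RTree (CatV n m)) : Prop :=
  T.supp = Finset.univ ∧ T.parent = AParent S π

/-- The parent function of the search tree `B(S)` on the caterpillar: every leg `ℓ_{i,j}`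
is a (childless) child of `s_i`, and the spine nodes are arranged according to `S`. -/
def BParent {n : ℕ} {m : Fin n → ℕ} (S : RTree (Fin n)) :
    CatV n m → Option (CatV n m) :=
  fun x => match x with
  | Sum.inl i => (S.parent i).map Sum.inl
  | Sum.inr l => some (Sum.inl l.1)

/-- `T = B(S)`. -/
def IsB {n : ℕ} {m : Fin n → ℕ} (S : RTree (Fin n)) (T : RTree (CatV n m)) : Prop :=
  T.supp = Finset.univ ∧ T.parent = BParent S

/-- `σ(π)`: the sequence of spine indices obtained from the leg ordering `π` by replacing
each leg `ℓ_{i,j}` with `i`. -/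
def sigmaOf {n : ℕ} {m : Fin n → ℕ}
    (π : Fin (∑ i, m i) ≃ (Σ i : Fin n, Fin (m i))) : List (Fin n) :=
  List.ofFn (fun j => (π j).1)

/-- Every leg node of `T` is bound, i.e. no leg node has a child. -/
def noFreeLegs {n : ℕ} {m : Fin n → ℕ} (T : RTree (CatV n m)) : Prop :=
  ∀ (x : CatV n m) (l : Σ i : Fin n, Fin (m i)), T.parent x ≠ some (Sum.inr l)

open Classical in
/-- The number of adjacent pairs in a list satisfying `P`. -/
noncomputable def pairAlt {α : Type} (P : α → α → Prop) : List α → ℕ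
  | [] => 0
  | [_] => 0
  | a :: b :: t => (if P a b then 1 else 0) + pairAlt P (b :: t)

open Classical in
/-- Wilber's quantity `λ(S, u, σ)`: 0 if `u` has at most one child; otherwise the number
of adjacent pairs in the restriction of `σ` to the subtree of `u` that do not both lie in
the subtree of one child of `u` and are not both equal to `u`. -/
noncomputable def wilberLam {n : ℕ} (S : RTree (Fin n)) (u : Fin n) (σ : List (Fin n)) : ℕ :=
  if (∃ v w : Fin n, v ≠ w ∧ S.parent v = some u ∧ S.parent w = some u) then
    pairAlt (fun x y =>
      ¬((x = u ∧ y = u) ∨ ∃ ch, S.parent ch = some u ∧ S.Anc ch x ∧ S.Anc ch y))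
      (σ.filter (fun x => decide (S.Anc u x)))
  else 0

/-- `λ'(S, u, σ) = λ(S, u, σ)` plus the number of occurrences of `u` in `σ`. -/
noncomputable def wilberLam' {n : ℕ} (S : RTree (Fin n)) (u : Fin n)
    (σ : List (Fin n)) : ℕ :=
  wilberLam S u σ + σ.count u

/-- Wilber's first lower bound `Λ'(S, σ) = ∑_u λ'(S, u, σ)`. -/
noncomputable def wilberL' {n : ℕ} (S : RTree (Fin n)) (σ : List (Fin n)) : ℕ :=
  ∑ u : Fin n, wilberLam' S u σ

/-- `P` is the projection `T[U]` of `T` onto `U`: its nodes are the nodes of `T` in `U`,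
and the parent of `u` in `P` is the nearest strict ancestor of `u` in `T` that lies
in `U` (which is exactly the result of pruning the vertices outside `U` one by one). -/
def IsProjOn {V : Type} [DecidableEq V] (T : RTree V) (U : Finset V) (P : RTree V) : Prop :=
  P.supp = T.supp ∩ U ∧
  ∀ u w : V, P.parent u = some w ↔
    (u ∈ U ∧ w ∈ U ∧ T.StrictAnc w u ∧ ∀ z ∈ U, T.StrictAnc z u → T.Anc z w)

/-- `P` is obtained from `T` by pruning the vertex `v`. -/
def IsPruneOf {V : Type} [DecidableEq V] (T : RTree V) (v : V) (P : RTree V) : Prop :=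
  IsProjOn T (T.supp.erase v) P

/-- `PruneSeq T l P`: `P` is obtained from `T` by successively pruning the
vertices in the list `l`, in order. -/
def PruneSeq {V : Type} [DecidableEq V] : RTree V → List V → RTree V → Prop
  | T, [], P => P = T
  | T, v :: rest, P => ∃ P', IsPruneOf T v P' ∧ PruneSeq P' rest P

/-- The number of alternations (edges whose endpoints get different colors under `f`)
on the path from the root to `z`. -/
noncomputable def altAt {V K : Type} (f : V → K) (T : RTree V) (z : V) : ℕ :=
  Set.ncard {x | T.Anc x z ∧ ∃ y, T.parent x = some y ∧ f x ≠ f y}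

/-- The alternation number of `T` w.r.t. the coloring `f`: the maximum number of
alternations on a root-to-node path. -/
noncomputable def altNum {V K : Type} (f : V → K) (T : RTree V) : ℕ :=
  T.supp.sup (fun z => altAt f T z)

/-! A search tree on the path `0 - 1 - ⋯ - (n - 1)` is an ordinary binary search tree, so it is
described by the shape of a binary tree. Sweep through the keys in increasing order, keeping the
keys `0, …, m - 1` already visited as a path descending to the left from the root `m - 1` and
the keys from `m` on in its right subtree `R` (initially `m = 0` and `R` is the whole tree).
While the root of `R` has a left child, rotate that child up (nodes at depth 2 and 3); once it
has none, it is the key `m`, and rotating it to the root (depth 1 and 2) makes `m` the root.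
Every rotation lowers `2 |R| - (length of the right spine of R)` by one, so at most `2 n`
rotations are used. -/

open Relation BinaryTree

namespace RTree

variable {V : Type} {T : RTree V} {a b c v x : V}

theorem anc_of_parent_eq (h : T.parent v = some a) : T.Anc a v := ReflTransGen.single h

theorem Anc.trans (h₁ : T.Anc a b) (h₂ : T.Anc b c) : T.Anc a c := ReflTransGen.trans h₂ h₁

theorem Anc.total (ha : T.Anc a v) (hb : T.Anc b v) : T.Anc b a ∨ T.Anc a b :=
  ReflTransGen.total_of_right_unique (fun _ _ _ h₁ h₂ => Option.some.inj (h₁.symm.trans h₂)) ha hb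

theorem exists_child_of_anc (h : T.Anc a v) (hne : v ≠ a) :
    ∃ x, T.parent x = some a ∧ T.Anc x v := by
  rcases ReflTransGen.cases_tail h with rfl | ⟨x, hvx, hx⟩
  · exact absurd rfl hne
  · exact ⟨x, hx, hvx⟩

theorem eq_of_anc_of_anc_of_root {r : V} (hr : T.parent r = none) (har : T.Anc r a)
    (h₁ : T.Anc a b) (h₂ : T.Anc b a) : a = b := by
  induction har using ReflTransGen.head_induction_on generalizing b with
  | refl =>
    rcases ReflTransGen.cases_head h₂ with h | ⟨_, h, _⟩
    · exact h
    · simp [hr] at h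
  | head ha _ ih =>
    rcases ReflTransGen.cases_head h₂ with h | ⟨a'', h, hb⟩
    · exact h
    obtain rfl := Option.some.inj (h.symm.trans ha)
    obtain rfl := ih (h₁.tail ha) hb
    exact (ih (anc_of_parent_eq ha) h₁).symm

theorem Anc.antisymm (ha : a ∈ T.supp) (h₁ : T.Anc a b) (h₂ : T.Anc b a) : a = b := by
  obtain ⟨r, -, hr, har⟩ := T.reaches_root a ha
  exact eq_of_anc_of_anc_of_root hr har h₁ h₂

theorem parent_ne_self (hx : x ∈ T.supp) : T.parent x ≠ some x := by
  intro hxx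
  obtain ⟨r, -, hr, hxr⟩ := T.reaches_root x hx
  have hfix : ∀ y, ReflTransGen (fun a b => T.parent a = some b) x y → y = x := by
    intro y hy
    induction hy with
    | refl => rfl
    | tail _ hyz ih => subst ih; exact Option.some.inj (hyz.symm.trans hxx)
  simp [hfix r hxr, hxx] at hr

theorem not_anc_of_parent_eq (hx : x ∈ T.supp) (h : T.parent x = some v) : ¬ T.Anc x v := by
  intro hxv
  obtain rfl := hxv.antisymm hx (anc_of_parent_eq h)
  exact parent_ne_self hx h

theorem depth_le_one_of_parent_eq_none [Finite V] (h : T.parent v = none) : T.depth v ≤ 1 := by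
  have hsub : {a | T.Anc a v} ⊆ {v} := by
    intro a ha
    rcases ReflTransGen.cases_head ha with rfl | ⟨_, hv, _⟩
    · rfl
    · simp [h] at hv
  exact (Set.ncard_le_ncard hsub).trans (by simp)

theorem depth_le_succ_of_parent_eq [Finite V] (h : T.parent v = some a) :
    T.depth v ≤ T.depth a + 1 := by
  have hsub : {b | T.Anc b v} ⊆ insert v {b | T.Anc b a} := by
    intro b hb
    rcases ReflTransGen.cases_head hb with rfl | ⟨a', hv, hb⟩
    · exact Set.mem_insert _ _
    · obtain rfl : a' = a := Option.some.inj (hv.symm.trans h)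
      exact Set.mem_insert_of_mem _ hb
  exact (Set.ncard_le_ncard hsub).trans (Set.ncard_insert_le _ _)

theorem eq_of_adj_of_anc_child {G : SimpleGraph V} {U : Finset V}
    (hT : IsSTGOn G U T) {y z : V} (hx : T.parent x = some v) (hy : T.Anc v y)
    (hz : T.Anc x z) (hyz : G.Adj y z) (hxy : ¬ T.Anc x y) (hyU : y ∈ U) (hzU : z ∈ U) :
    y = v := by
  rcases hT.2.2 y z hyU hzU hyz with hyz | hzy
  · rcases hyz.total hz with hxy' | hyx
    · exact absurd hxy' hxy
    rcases ReflTransGen.cases_head hyx with rfl | ⟨w, hw, hwy⟩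
    · exact absurd ReflTransGen.refl hxy
    obtain rfl : w = v := Option.some.inj (hw.symm.trans hx)
    exact (hy.antisymm (T.mem_of_parent hx).2 hwy).symm
  · exact absurd (hz.trans hzy) hxy

end RTree

namespace RTree

section Fin

variable {n : ℕ} {T T' : RTree (Fin n)} {F F' : ℕ → Option ℕ}

theorem reflTransGen_iff_of_map_val {P : Fin n → Option (Fin n)}
    (hP : ∀ v, (P v).map Fin.val = F v) {a b : Fin n} :
    ReflTransGen (fun x y => P x = some y) a b ↔
      ReflTransGen (fun x y => F x = some y) a.val b.val := by
  constructor
  · exact ReflTransGen.lift Fin.val (fun x y h => show F x = some y by rw [← hP x, h]; rfl) a b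
  · suffices ∀ x, ReflTransGen (fun x y => F x = some y) x b.val →
        ∀ a : Fin n, a.val = x → ReflTransGen (fun x y => P x = some y) a b from
      fun h => this _ h a rfl
    intro x h
    induction h using ReflTransGen.head_induction_on with
    | refl => intro a ha; rw [Fin.ext ha]
    | head hxc _ ih =>
      intro a ha
      subst ha
      obtain ⟨c, hc, rfl⟩ := Option.map_eq_some_iff.mp ((hP a).trans hxc)
      exact ReflTransGen.head hc (ih c rfl)

theorem anc_iff_of_parent_map
    (hT : ∀ v, (T.parent v).map Fin.val = F v) {a v : Fin n} :
    T.Anc a v ↔ ReflTransGen (fun x y => F x = some y) v.val a.val :=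
  reflTransGen_iff_of_map_val hT

theorem ext_of_parent_map (hsupp : T.supp = T'.supp)
    (hparent : ∀ v, (T.parent v).map Fin.val = (T'.parent v).map Fin.val) : T = T' := by
  obtain ⟨s, P, _, _, _, _⟩ := T
  obtain ⟨s', P', _, _, _, _⟩ := T'
  obtain rfl : s = s' := hsupp
  obtain rfl : P = P' := funext fun v => Option.map_injective Fin.val_injective (hparent v)
  rfl

def ofNatParent (n : ℕ) (F : ℕ → Option ℕ) (r : ℕ) (hF : ∀ x y, F x = some y → y < n)
    (hroot : ∀ x < n, F x = none ↔ x = r)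
    (hreach : ∀ x < n, ReflTransGen (fun a b => F a = some b) x r) : RTree (Fin n) where
  supp := Finset.univ
  parent v := (F v).pmap (fun y hy => ⟨y, hy⟩) fun y hy => hF v y hy
  parent_eq_none v hv := absurd (Finset.mem_univ v) hv
  mem_of_parent _ := ⟨Finset.mem_univ _, Finset.mem_univ _⟩
  root_unique v _ w _ hv hw := by
    simp only [Option.pmap_eq_none_iff] at hv hw
    exact Fin.ext (((hroot v v.isLt).mp hv).trans ((hroot w w.isLt).mp hw).symm)
  reaches_root v _ := by
    have hr : r < n := by
      rcases ReflTransGen.cases_tail (hreach v v.isLt) with h | ⟨x, -, hx⟩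
      · exact h ▸ v.isLt
      · exact hF x r hx
    refine ⟨⟨r, hr⟩, Finset.mem_univ _, by simp [(hroot r hr).mpr rfl], ?_⟩
    exact (reflTransGen_iff_of_map_val (F := F) (fun v => by simp [Option.map_pmap])).mpr
      (hreach v v.isLt)

section

variable {r : ℕ} {hF : ∀ x y, F x = some y → y < n}
  {hroot : ∀ x < n, F x = none ↔ x = r}
  {hreach : ∀ x < n, ReflTransGen (fun a b => F a = some b) x r}

theorem ofNatParent_parent_map (v : Fin n) :
    ((ofNatParent n F r hF hroot hreach).parent v).map Fin.val = F v := by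
  simp [ofNatParent, Option.map_pmap]

theorem ofNatParent_isRoot_iff {x : Fin n} :
    (ofNatParent n F r hF hroot hreach).IsRoot x ↔ x.val = r := by
  simp [IsRoot, ofNatParent, hroot x x.isLt]

end

theorem parent_eq_some_iff_of_parent_map (hT : ∀ v, (T.parent v).map Fin.val = F v)
    {v w : Fin n} : T.parent v = some w ↔ F v = some w.val := by
  rw [← hT, Option.map_eq_some_iff]
  exact ⟨fun h => ⟨w, h, rfl⟩, fun ⟨w', h, hw⟩ => Fin.ext hw ▸ h⟩

theorem isRotationAt_pathGraph_of_parent_map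
    (hT : ∀ v, (T.parent v).map Fin.val = F v) (hT' : ∀ v, (T'.parent v).map Fin.val = F' v)
    (hsupp : T'.supp = T.supp) {p c : Fin n}
    (hc : F c = some p.val) (hc' : F' c = F p) (hp' : F' p = some c.val)
    (hchild : ∀ x : Fin n, x ≠ p → F x = some c.val →
      (F' x = some p.val ∧ ∃ u : Fin n, ReflTransGen (fun a b => F a = some b) u x ∧
          (u.val + 1 = p ∨ p.val + 1 = u)) ∨
      (F' x = some c.val ∧ ∀ u : ℕ, ReflTransGen (fun a b => F a = some b) u x →
          u + 1 ≠ p ∧ p.val + 1 ≠ u))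
    (hother : ∀ x : Fin n, x ≠ c → x ≠ p → F x ≠ some c.val → F' x = F x) :
    IsRotationAt (SimpleGraph.pathGraph n) T T' p c := by
  have hmap : ∀ {v w : Fin n}, F' v = F w → T'.parent v = T.parent w := fun h =>
    Option.map_injective Fin.val_injective (by rw [hT', hT, h])
  refine ⟨(parent_eq_some_iff_of_parent_map hT).mpr hc, hsupp, hmap hc',
    (parent_eq_some_iff_of_parent_map hT').mpr hp', fun x hxp hx => ?_,
    fun x hxc hxp hx => hmap (hother x hxc hxp (mt (parent_eq_some_iff_of_parent_map hT).mpr hx))⟩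
  simp only [descSet, Set.mem_ofPred_eq, anc_iff_of_parent_map hT, SimpleGraph.pathGraph_adj]
  rcases hchild x hxp ((parent_eq_some_iff_of_parent_map hT).mp hx) with
    ⟨hx', u, hu, hup⟩ | ⟨hx', hno⟩
  · exact ⟨fun _ => (parent_eq_some_iff_of_parent_map hT').mpr hx',
      fun h => absurd ⟨u, hu, hup⟩ h⟩
  · exact ⟨fun ⟨u, hu, hup⟩ => absurd hup (not_or.mpr (hno u hu)),
      fun _ => (parent_eq_some_iff_of_parent_map hT').mpr hx'⟩

end Fin

end RTree

namespace BinaryTree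

/-- The parent of the key `x` in the search tree of shape `s` on the keys `lo, lo + 1, …`
whose root hangs below `up`. -/
def keyParent : BinaryTree Unit → ℕ → Option ℕ → ℕ → Option ℕ
  | nil, _, _, _ => none
  | node _ l r, lo, up, x =>
    if x = lo + l.numNodes then up
    else if x < lo + l.numNodes then l.keyParent lo (some (lo + l.numNodes)) x
    else r.keyParent (lo + l.numNodes + 1) (some (lo + l.numNodes)) x

def rootKey (s : BinaryTree Unit) (lo : ℕ) : ℕ := lo + s.left.numNodes

def rightSpineLength : BinaryTree Unit → ℕ
  | nil => 0
  | node _ _ r => r.rightSpineLength + 1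

theorem rightSpineLength_le_numNodes : ∀ s : BinaryTree Unit, s.rightSpineLength ≤ s.numNodes
  | nil => le_rfl
  | node _ _ r => by have := r.rightSpineLength_le_numNodes; simp [rightSpineLength]; omega

variable {s : BinaryTree Unit} {lo x w : ℕ} {up : Option ℕ}

theorem ne_nil_of_numNodes_pos (h : 0 < s.numNodes) : s ≠ nil := by
  rintro rfl; simp at h

theorem keyParent_rootKey (hs : s ≠ nil) : s.keyParent lo up (s.rootKey lo) = up := by
  cases s with
  | nil => exact absurd rfl hs
  | node _ l r => simp [keyParent, rootKey]

theorem keyParent_up_of_ne_rootKey (up' : Option ℕ) (hx : x ≠ s.rootKey lo) :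
    s.keyParent lo up x = s.keyParent lo up' x := by
  cases s with
  | nil => rfl
  | node _ l r => simp only [rootKey, left] at hx; simp only [keyParent, if_neg hx]

theorem keyParent_eq_some :
    ∀ {s : BinaryTree Unit} {lo : ℕ} {up : Option ℕ} {x w : ℕ}, s.keyParent lo up x = some w →
      lo ≤ x ∧ x < lo + s.numNodes ∧
        ((x = s.rootKey lo ∧ up = some w) ∨ (lo ≤ w ∧ w < lo + s.numNodes))
  | nil, _, _, _, _, h => by simp [keyParent] at h
  | node _ l r, lo, up, x, w, h => by
    simp only [keyParent] at h
    split_ifs at h with h₁ h₂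
    · subst h₁; simp [rootKey, h]
    · have := keyParent_eq_some h; simp [rootKey] at this ⊢; omega
    · have := keyParent_eq_some h; simp [rootKey] at this ⊢; omega

theorem exists_keyParent_eq_some :
    ∀ {s : BinaryTree Unit} {lo : ℕ} (up : Option ℕ) {x : ℕ}, lo ≤ x → x < lo + s.numNodes →
      x ≠ s.rootKey lo → ∃ w, s.keyParent lo up x = some w
  | nil, _, _, _, h₁, h₂, _ => by simp at h₂; omega
  | node _ l r, lo, up, x, h₁, h₂, h₃ => by
    simp only [rootKey, left] at h₃
    simp only [numNodes] at h₂
    simp only [keyParent, if_neg h₃]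
    split_ifs with h₄
    · by_cases hx : x = l.rootKey lo
      · exact ⟨_, hx ▸ keyParent_rootKey (ne_nil_of_numNodes_pos (by omega))⟩
      · exact exists_keyParent_eq_some _ h₁ h₄ hx
    · by_cases hx : x = r.rootKey (lo + l.numNodes + 1)
      · exact ⟨_, hx ▸ keyParent_rootKey (ne_nil_of_numNodes_pos (by omega))⟩
      · exact exists_keyParent_eq_some _ (by omega) (by omega) hx

theorem keyParent_eq_none_iff (h₁ : lo ≤ x) (h₂ : x < lo + s.numNodes) :
    s.keyParent lo up x = none ↔ x = s.rootKey lo ∧ up = none := by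
  by_cases hx : x = s.rootKey lo
  · rw [hx, keyParent_rootKey (ne_nil_of_numNodes_pos (by omega))]; simp
  · obtain ⟨w, hw⟩ := exists_keyParent_eq_some up h₁ h₂ hx
    simp [hw, hx]

theorem reflTransGen_rootKey {S : ℕ → ℕ → Prop} :
    ∀ {s : BinaryTree Unit} {lo : ℕ} {up : Option ℕ},
      (∀ y w, s.keyParent lo up y = some w → S y w) →
      ∀ {x}, lo ≤ x → x < lo + s.numNodes → ReflTransGen S x (s.rootKey lo)
  | nil, _, _, _, _, h₁, h₂ => by simp at h₂; omega
  | node _ l r, lo, up, hS, x, h₁, h₂ => by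
    simp only [numNodes] at h₂
    simp only [rootKey, left]
    rcases lt_trichotomy x (lo + l.numNodes) with hx | rfl | hx
    · have hl := ne_nil_of_numNodes_pos (s := l) (by omega)
      have hSl : ∀ y w, l.keyParent lo (some (lo + l.numNodes)) y = some w → S y w := by
        intro y w hy
        obtain ⟨-, hy', -⟩ := keyParent_eq_some hy
        exact hS y w (by simp only [keyParent]; rwa [if_neg (by omega), if_pos hy'])
      exact (reflTransGen_rootKey hSl h₁ hx).tail (hSl _ _ (keyParent_rootKey hl))
    · exact ReflTransGen.refl
    · have hr := ne_nil_of_numNodes_pos (s := r) (by omega)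
      have hSr : ∀ y w, r.keyParent (lo + l.numNodes + 1) (some (lo + l.numNodes)) y = some w →
          S y w := by
        intro y w hy
        obtain ⟨hy', -, -⟩ := keyParent_eq_some hy
        exact hS y w (by simp only [keyParent]; rwa [if_neg (by omega), if_neg (by omega)])
      exact (reflTransGen_rootKey hSr (by omega) (by omega)).tail (hSr _ _ (keyParent_rootKey hr))

end BinaryTree

section Sweep

def spineTop (m : ℕ) : Option ℕ := if m = 0 then none else some (m - 1)

/-- The parent function of the tree in which the keys `0, …, m - 1` form a path descending to
the left from the root `m - 1`, and the shape `R` carries the keys from `m` on as the right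
subtree of `m - 1` (as the whole tree if `m = 0`). -/
def sweepParent (m : ℕ) (R : BinaryTree Unit) (x : ℕ) : Option ℕ :=
  if x + 1 < m then some (x + 1) else if x + 1 = m then none else R.keyParent m (spineTop m) x

def sweepRoot (m : ℕ) (R : BinaryTree Unit) : ℕ := if m = 0 then R.rootKey 0 else m - 1

variable {n m x y : ℕ} {R : BinaryTree Unit}

theorem sweepParent_of_lt (h : x + 1 < m) : sweepParent m R x = some (x + 1) := by
  simp [sweepParent, h]

theorem sweepParent_of_succ_eq (h : x + 1 = m) : sweepParent m R x = none := by
  simp [sweepParent, h]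

theorem sweepParent_of_le (h : m ≤ x) : sweepParent m R x = R.keyParent m (spineTop m) x := by
  simp [sweepParent, show ¬ x + 1 < m by omega, show x + 1 ≠ m by omega]

theorem lt_of_sweepParent_eq_some (h : sweepParent m R x = some y) : y < m + R.numNodes := by
  rcases lt_or_ge x m with hx | hx
  · by_cases hxm : x + 1 < m
    · rw [sweepParent_of_lt hxm] at h; cases h; omega
    · rw [sweepParent_of_succ_eq (by omega)] at h; cases h
  · rw [sweepParent_of_le hx] at h
    obtain ⟨-, -, ⟨-, hup⟩ | ⟨-, hy⟩⟩ := keyParent_eq_some h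
    · simp only [spineTop] at hup; split_ifs at hup; cases hup; omega
    · exact hy

theorem sweepParent_eq_none_iff (hx : x < m + R.numNodes) :
    sweepParent m R x = none ↔ x = sweepRoot m R := by
  rcases lt_or_ge x m with hxm | hxm
  · by_cases h : x + 1 < m
    · simp [sweepParent_of_lt h, sweepRoot, if_neg (show m ≠ 0 by omega)]; omega
    · simp [sweepParent_of_succ_eq (R := R) (show x + 1 = m by omega), sweepRoot,
        if_neg (show m ≠ 0 by omega)]; omega
  · rw [sweepParent_of_le hxm, keyParent_eq_none_iff hxm hx, sweepRoot, spineTop]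
    split_ifs with hm
    · subst hm; simp
    · simp; omega

theorem reflTransGen_sweepRoot (hx : x < m + R.numNodes) :
    ReflTransGen (fun a b => sweepParent m R a = some b) x (sweepRoot m R) := by
  rcases lt_or_ge x m with hxm | hxm
  · rw [sweepRoot, if_neg (by omega)]
    obtain ⟨d, rfl⟩ : ∃ d, m = x + d + 1 := ⟨m - x - 1, by omega⟩
    induction d generalizing x with
    | zero => simpa using ReflTransGen.refl
    | succ d ih =>
      have := ih (x := x + 1) (by omega) (by omega)
      rw [show x + 1 + d + 1 = x + (d + 1) + 1 by omega] at this
      exact .head (sweepParent_of_lt (by omega)) (by simpa using this)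
  · have hR : R ≠ nil := ne_nil_of_numNodes_pos (by omega)
    have hS : ∀ y w, R.keyParent m (spineTop m) y = some w → sweepParent m R y = some w :=
      fun y w h => by rwa [sweepParent_of_le (keyParent_eq_some h).1]
    have hroot := reflTransGen_rootKey hS hxm hx
    rw [sweepRoot]
    split_ifs with hm
    · subst hm; exact hroot
    · exact hroot.tail (hS _ _ (by rw [keyParent_rootKey hR, spineTop, if_neg hm]))

def sweepTree (n m : ℕ) (R : BinaryTree Unit) (hn : m + R.numNodes = n) : RTree (Fin n) :=
  RTree.ofNatParent n (sweepParent m R) (sweepRoot m R)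
    (fun _ _ h => hn ▸ lt_of_sweepParent_eq_some h)
    (fun _ hx => sweepParent_eq_none_iff (hn ▸ hx)) (fun _ hx => reflTransGen_sweepRoot (hn ▸ hx))

theorem lt_of_sweepParent_eq_some_of_lt (hx : x < m) (h : sweepParent m R x = some y) : y < m := by
  by_cases hxm : x + 1 < m
  · rw [sweepParent_of_lt hxm] at h; cases h; exact hxm
  · rw [sweepParent_of_succ_eq (by omega)] at h; cases h

theorem sweepParent_eq_of_lt (hx : x < m) (R' : BinaryTree Unit) :
    sweepParent m R x = sweepParent m R' x := by
  by_cases hxm : x + 1 < m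
  · rw [sweepParent_of_lt hxm, sweepParent_of_lt hxm]
  · rw [sweepParent_of_succ_eq (by omega), sweepParent_of_succ_eq (by omega)]

theorem sweepTree_parent_map (hn : m + R.numNodes = n) (v : Fin n) :
    ((sweepTree n m R hn).parent v).map Fin.val = sweepParent m R v :=
  RTree.ofNatParent_parent_map v

theorem sweepTree_isRoot_iff (hn : m + R.numNodes = n) {v : Fin n} :
    (sweepTree n m R hn).IsRoot v ↔ v.val = sweepRoot m R :=
  RTree.ofNatParent_isRoot_iff

theorem sweepTree_depth_le_two (hn : m + R.numNodes = n) {v : Fin n}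
    (hv : sweepParent m R v = spineTop m) : (sweepTree n m R hn).depth v ≤ 2 := by
  have hT := sweepTree_parent_map hn
  rw [spineTop] at hv
  split_ifs at hv with hm
  · have : (sweepTree n m R hn).parent v = none := by simpa [hv] using hT v
    exact (RTree.depth_le_one_of_parent_eq_none this).trans (by norm_num)
  · have hmn : m - 1 < n := by have := v.isLt; omega
    have hroot : (sweepTree n m R hn).parent ⟨m - 1, hmn⟩ = none := by
      simpa [sweepParent_of_succ_eq (show m - 1 + 1 = m by omega)] using hT ⟨m - 1, hmn⟩
    have hv' := (RTree.parent_eq_some_iff_of_parent_map hT (w := ⟨m - 1, hmn⟩)).mpr hv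
    exact (RTree.depth_le_succ_of_parent_eq hv').trans
      (by have := RTree.depth_le_one_of_parent_eq_none hroot; omega)

end Sweep

section PathGraph

variable {n : ℕ} {T : RTree (Fin n)}

theorem mem_of_walk_induce_pathGraph {s : Set (Fin n)} {u w : s}
    (p : ((restrictG (SimpleGraph.pathGraph n) ↑(Finset.univ : Finset (Fin n))).induce s).Walk u w)
    {x : Fin n}
    (hx : u.val.val ≤ x.val ∧ x.val ≤ w.val.val ∨ w.val.val ≤ x.val ∧ x.val ≤ u.val.val) :
    x ∈ s := by
  induction p with
  | @nil a =>
    obtain rfl : x = a := Fin.ext (by omega)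
    exact a.2
  | @cons a b c h _ ih =>
    by_cases hxa : x = a
    · exact hxa ▸ a.2
    · have hadj := SimpleGraph.pathGraph_adj.mp h.1
      simp only [Function.Embedding.subtype_apply] at hadj
      exact ih (by have := Fin.val_ne_of_ne hxa; omega)

theorem exists_descSet_eq_Ico (hT : IsSTG (SimpleGraph.pathGraph n) T) (v : Fin n) :
    ∃ a e, a ≤ v.val ∧ v.val < e ∧ e ≤ n ∧ T.descSet v = Fin.val ⁻¹' Set.Ico a e := by
  classical
  have hv : v ∈ T.descSet v := ReflTransGen.refl
  set D := (T.descSet v).toFinset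
  have hD : D.Nonempty := ⟨v, Set.mem_toFinset.mpr hv⟩
  have hmin := Set.mem_toFinset.mp (D.min'_mem hD)
  have hmax := Set.mem_toFinset.mp (D.max'_mem hD)
  refine ⟨(D.min' hD).val, (D.max' hD).val + 1, D.min'_le v (Set.mem_toFinset.mpr hv),
    Nat.lt_succ_of_le (D.le_max' v (Set.mem_toFinset.mpr hv)), (D.max' hD).isLt,
    Set.ext fun x => ⟨fun hx => ?_, ?_⟩⟩
  · exact ⟨D.min'_le x (Set.mem_toFinset.mpr hx),
      Nat.lt_succ_of_le (D.le_max' x (Set.mem_toFinset.mpr hx))⟩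
  · rintro ⟨h₁, h₂⟩
    obtain ⟨p⟩ := (hT.2.1 v (Finset.mem_univ v)).preconnected ⟨_, hmin⟩ ⟨_, hmax⟩
    exact mem_of_walk_induce_pathGraph p (.inl ⟨h₁, Nat.le_of_lt_succ h₂⟩)

/-- An edge of the path leaving the subtree of a child of `v` must lead to `v`, so the interval
of the child reaches the end of the interval of `v` on its side. -/
theorem descSet_child_ends (hT : IsSTG (SimpleGraph.pathGraph n) T) {v x : Fin n}
    {a e a' e' : ℕ} (hx : T.parent x = some v) (hv : T.descSet v = Fin.val ⁻¹' Set.Ico a e)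
    (he : e ≤ n) (hx' : T.descSet x = Fin.val ⁻¹' Set.Ico a' e') (hae : a' < e') (he' : e' ≤ n) :
    (a' = a ∨ a' = v.val + 1) ∧ (e' = e ∨ e' = v.val) := by
  have hmem : ∀ {y : Fin n}, y ∈ T.descSet x ↔ a' ≤ y.val ∧ y.val < e' := by
    intro y; rw [hx']; rfl
  have hmemv : ∀ {y : Fin n}, y ∈ T.descSet v ↔ a ≤ y.val ∧ y.val < e := by
    intro y; rw [hv]; rfl
  have hsub : ∀ {y : Fin n}, y ∈ T.descSet x → a ≤ y.val ∧ y.val < e := fun hy =>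
    hmemv.mp ((RTree.anc_of_parent_eq hx).trans hy)
  have hedge : ∀ y z : Fin n, y ∈ T.descSet v → z ∈ T.descSet x → y ∉ T.descSet x →
      y.val + 1 = z.val ∨ z.val + 1 = y.val → y = v := fun y z hy hz hyx hyz =>
    RTree.eq_of_adj_of_anc_child hT hx hy hz (SimpleGraph.pathGraph_adj.mpr hyz) hyx
      (Finset.mem_univ _) (Finset.mem_univ _)
  have hee : e' ≤ e := by
    have := hsub (hmem.mpr ⟨show a' ≤ e' - 1 by omega, show e' - 1 < e' by omega⟩ :
      (⟨e' - 1, by omega⟩ : Fin n) ∈ _)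
    exact Nat.le_of_pred_lt this.2
  have ha' : a ≤ a' := (hsub (hmem.mpr ⟨le_rfl, hae⟩ : (⟨a', by omega⟩ : Fin n) ∈ _)).1
  constructor
  · by_contra h
    have := hedge ⟨a' - 1, by omega⟩ ⟨a', by omega⟩
      (hmemv.mpr ⟨show a ≤ a' - 1 by omega, show a' - 1 < e by omega⟩) (hmem.mpr ⟨le_rfl, hae⟩)
      (fun h' => absurd (hmem.mp h').1 (show ¬ a' ≤ a' - 1 by omega))
      (.inl (show a' - 1 + 1 = a' by omega))
    exact h (.inr (by rw [← this]; simp; omega))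
  · by_contra h
    have := hedge ⟨e', by omega⟩ ⟨e' - 1, by omega⟩
      (hmemv.mpr ⟨show a ≤ e' by omega, show e' < e by omega⟩)
      (hmem.mpr ⟨show a' ≤ e' - 1 by omega, show e' - 1 < e' by omega⟩)
      (fun h' => absurd (hmem.mp h').2 (lt_irrefl e'))
      (.inr (show e' - 1 + 1 = e' by omega))
    exact h (.inr (by rw [← this]))

theorem exists_child_descSet_eq_Ico (hT : IsSTG (SimpleGraph.pathGraph n) T) {v k : Fin n}
    {a e : ℕ} (hv : T.descSet v = Fin.val ⁻¹' Set.Ico a e) (he : e ≤ n) (hk : k ∈ T.descSet v)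
    (hkv : k ≠ v) :
    ∃ x, T.parent x = some v ∧
      (k < v → T.descSet x = Fin.val ⁻¹' Set.Ico a v) ∧
      (v < k → T.descSet x = Fin.val ⁻¹' Set.Ico (v + 1) e) := by
  obtain ⟨x, hx, hxk⟩ := RTree.exists_child_of_anc hk hkv
  obtain ⟨a', e', hax, hxe, he', hx'⟩ := exists_descSet_eq_Ico hT x
  have hends := descSet_child_ends hT hx hv he hx' (by omega) he'
  have hkx : a' ≤ k.val ∧ k.val < e' := by
    have : k ∈ T.descSet x := hxk
    rwa [hx'] at this
  have hvx : ¬ (a' ≤ v.val ∧ v.val < e') := fun h =>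
    RTree.not_anc_of_parent_eq (hT.1 ▸ Finset.mem_univ x) hx
      (show v ∈ T.descSet x by rw [hx']; exact h)
  have hvv : a ≤ v.val ∧ v.val < e := by
    have : v ∈ T.descSet v := ReflTransGen.refl
    rwa [hv] at this
  refine ⟨x, hx, fun hkv' => ?_, fun hkv' => ?_⟩ <;> rw [hx'] <;> congr 2 <;>
    rw [Fin.lt_def] at hkv' <;> omega

theorem exists_child_descSet_eq_Ico_left (hT : IsSTG (SimpleGraph.pathGraph n) T) {v : Fin n}
    {a e : ℕ} (hv : T.descSet v = Fin.val ⁻¹' Set.Ico a e) (he : e ≤ n) (ha : a < v.val) :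
    ∃ x, T.parent x = some v ∧ T.descSet x = Fin.val ⁻¹' Set.Ico a v := by
  have hvv : v ∈ T.descSet v := ReflTransGen.refl
  rw [hv] at hvv
  obtain ⟨x, hx, hleft, -⟩ := exists_child_descSet_eq_Ico hT hv he (k := ⟨v - 1, by omega⟩)
    (by rw [hv]; exact ⟨show a ≤ v - 1 by omega, show v - 1 < e by have := hvv.2; omega⟩)
    (fun h => absurd (congrArg Fin.val h) (show v.val - 1 ≠ v by omega))
  exact ⟨x, hx, hleft (Fin.lt_def.mpr (show v.val - 1 < v by omega))⟩

theorem exists_child_descSet_eq_Ico_right (hT : IsSTG (SimpleGraph.pathGraph n) T) {v : Fin n}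
    {a e : ℕ} (hv : T.descSet v = Fin.val ⁻¹' Set.Ico a e) (he : e ≤ n) (hve : v.val + 1 < e) :
    ∃ x, T.parent x = some v ∧ T.descSet x = Fin.val ⁻¹' Set.Ico (v + 1) e := by
  have hvv : v ∈ T.descSet v := ReflTransGen.refl
  rw [hv] at hvv
  obtain ⟨x, hx, -, hright⟩ := exists_child_descSet_eq_Ico hT hv he (k := ⟨v + 1, by omega⟩)
    (by rw [hv]; exact ⟨show a ≤ v + 1 by have := hvv.1; omega, show v + 1 < e by omega⟩)
    (fun h => absurd (congrArg Fin.val h) (show v.val + 1 ≠ v by omega))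
  exact ⟨x, hx, hright (Fin.lt_def.mpr (show v.val < v + 1 by omega))⟩

theorem exists_shape_of_descSet_eq_Ico (hT : IsSTG (SimpleGraph.pathGraph n) T) {v : Fin n}
    {a e : ℕ} (hv : T.descSet v = Fin.val ⁻¹' Set.Ico a e) (he : e ≤ n) :
    ∃ t : BinaryTree Unit, t.numNodes = e - a ∧ t.rootKey a = v ∧
      ∀ x : Fin n, a ≤ x.val → x.val < e →
        (T.parent x).map Fin.val = t.keyParent a ((T.parent v).map Fin.val) x := by
  induction hs : e - a using Nat.strong_induction_on generalizing v a e with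
  | _ s ih =>
  have hvv : a ≤ v.val ∧ v.val < e := by
    have : v ∈ T.descSet v := ReflTransGen.refl
    rwa [hv] at this
  have side : ∀ a' e', e' - a' < s → e' ≤ n →
      (a' < e' → ∃ x, T.parent x = some v ∧ T.descSet x = Fin.val ⁻¹' Set.Ico a' e') →
      ∃ t : BinaryTree Unit, t.numNodes = e' - a' ∧ ∀ x : Fin n, a' ≤ x.val → x.val < e' →
        (T.parent x).map Fin.val = t.keyParent a' (some v) x := by
    intro a' e' hlt he' hchild
    by_cases hae : a' < e'
    · obtain ⟨x, hx, hdesc⟩ := hchild hae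
      obtain ⟨t, ht, -, hpar⟩ := ih _ hlt hdesc he' rfl
      exact ⟨t, ht, fun y h₁ h₂ => by rw [hpar y h₁ h₂, hx]; rfl⟩
    · exact ⟨nil, by simp; omega, fun y h₁ h₂ => by omega⟩
  obtain ⟨l, hl, hlp⟩ := side a v (by omega) (by omega)
    (exists_child_descSet_eq_Ico_left hT hv he)
  obtain ⟨r, hr, hrp⟩ := side (v + 1) e (by omega) he
    (exists_child_descSet_eq_Ico_right hT hv he)
  refine ⟨l △ r, by simp; omega, by simp [rootKey]; omega, fun x h₁ h₂ => ?_⟩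
  simp only [keyParent]
  rcases lt_trichotomy x.val v with h | h | h
  · rw [if_neg (by omega), if_pos (by omega), show a + l.numNodes = v by omega]
    exact hlp x h₁ h
  · rw [if_pos (by omega), Fin.ext h]
  · rw [if_neg (by omega), if_neg (by omega), show a + l.numNodes = v by omega]
    exact hrp x h h₂

theorem exists_eq_sweepTree (hT : IsSTG (SimpleGraph.pathGraph n) T) :
    ∃ (R : BinaryTree Unit) (hR : 0 + R.numNodes = n), T = sweepTree n 0 R hR := by
  rcases Nat.eq_zero_or_pos n with rfl | hn
  · exact ⟨nil, rfl, RTree.ext_of_parent_map (by rw [hT.1]; rfl) fun v => v.elim0⟩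
  obtain ⟨r, hr, hroot, -⟩ := T.reaches_root ⟨0, hn⟩ (hT.1 ▸ Finset.mem_univ _)
  have hdesc : T.descSet r = Fin.val ⁻¹' Set.Ico 0 n := by
    ext x
    simp only [Set.mem_preimage, Set.mem_Ico, zero_le, x.isLt, and_self, iff_true]
    obtain ⟨r', hr', hroot', hxr'⟩ := T.reaches_root x (hT.1 ▸ Finset.mem_univ _)
    exact T.root_unique r' hr' r hr hroot' hroot ▸ hxr'
  obtain ⟨R, hR, -, hpar⟩ := exists_shape_of_descSet_eq_Ico hT hdesc le_rfl
  refine ⟨R, by omega, RTree.ext_of_parent_map (by rw [hT.1]; rfl) fun v => ?_⟩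
  rw [sweepTree_parent_map, sweepParent_of_le (Nat.zero_le _), hpar v (Nat.zero_le _) v.isLt,
    hroot]
  rfl

end PathGraph

section RootSweep

variable {V : Type} {G : SimpleGraph V}

def IsShallowRotation (G : SimpleGraph V) (T T' : RTree V) : Prop :=
  ∃ p c, IsRotationAt G T T' p c ∧ T.depth p ≤ 3 ∧ T.depth c ≤ 3

def RootSweep (G : SimpleGraph V) (T : RTree V) (K : ℕ) (S : Set V) : Prop :=
  ∃ (k : ℕ) (f : ℕ → RTree V), k ≤ K ∧ f 0 = T ∧
    (∀ i < k, IsShallowRotation G (f i) (f (i + 1))) ∧ ∀ x ∈ S, ∃ i ≤ k, (f i).IsRoot x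

theorem rootSweep_zero (T : RTree V) : RootSweep G T 0 {x | T.IsRoot x} :=
  ⟨0, fun _ => T, le_rfl, rfl, fun _ h => absurd h (Nat.not_lt_zero _), fun _ hx => ⟨0, le_rfl, hx⟩⟩

theorem RootSweep.cons {T T' : RTree V} {K : ℕ} {S S' : Set V} (hT : IsShallowRotation G T T')
    (h : RootSweep G T' K S) (hS' : ∀ x ∈ S', x ∈ S ∨ T.IsRoot x) : RootSweep G T (K + 1) S' := by
  obtain ⟨k, f, hk, rfl, hf, hS⟩ := h
  refine ⟨k + 1, fun | 0 => T | i + 1 => f i, by omega, rfl, fun i hi => ?_, fun x hx => ?_⟩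
  · rcases i with _ | i
    · exact hT
    · exact hf i (by omega)
  · rcases hS' x hx with hx | hx
    · obtain ⟨i, hi, hroot⟩ := hS x hx
      exact ⟨i + 1, by omega, hroot⟩
    · exact ⟨0, by omega, hx⟩

theorem RootSweep.mono {T : RTree V} {K K' : ℕ} {S S' : Set V} (h : RootSweep G T K S)
    (hK : K ≤ K') (hS : S' ⊆ S) : RootSweep G T K' S' := by
  obtain ⟨k, f, hk, hf0, hf, hroot⟩ := h
  exact ⟨k, f, hk.trans hK, hf0, hf, fun x hx => hroot x (hS hx)⟩

end RootSweep

section RotateRight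

variable {n m x y w : ℕ} {A B C : BinaryTree Unit}

theorem sweepParent_node_left (hx : m ≤ x) :
    sweepParent m ((A △ B) △ C) x =
      if x < m + A.numNodes then A.keyParent m (some (m + A.numNodes)) x
      else if x = m + A.numNodes then some (m + A.numNodes + B.numNodes + 1)
      else if x < m + A.numNodes + B.numNodes + 1 then
        B.keyParent (m + A.numNodes + 1) (some (m + A.numNodes)) x
      else if x = m + A.numNodes + B.numNodes + 1 then spineTop m
      else C.keyParent (m + A.numNodes + B.numNodes + 2)
        (some (m + A.numNodes + B.numNodes + 1)) x := by
  rw [sweepParent_of_le hx]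
  simp only [keyParent, numNodes, ← add_assoc]
  split_ifs <;> first | rfl | omega

theorem sweepParent_node_right (hx : m ≤ x) :
    sweepParent m (A △ (B △ C)) x =
      if x < m + A.numNodes then A.keyParent m (some (m + A.numNodes)) x
      else if x = m + A.numNodes then spineTop m
      else if x < m + A.numNodes + B.numNodes + 1 then
        B.keyParent (m + A.numNodes + 1) (some (m + A.numNodes + B.numNodes + 1)) x
      else if x = m + A.numNodes + B.numNodes + 1 then some (m + A.numNodes)
      else C.keyParent (m + A.numNodes + B.numNodes + 2)
        (some (m + A.numNodes + B.numNodes + 1)) x := by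
  rw [sweepParent_of_le hx]
  simp only [keyParent,
    show m + A.numNodes + 1 + B.numNodes = m + A.numNodes + B.numNodes + 1 by omega]
  split_ifs <;> first | rfl | omega

theorem mem_left_of_sweepParent_eq_some (h : sweepParent m ((A △ B) △ C) y = some w)
    (hw₁ : m ≤ w) (hw₂ : w < m + A.numNodes) : m ≤ y ∧ y < m + A.numNodes := by
  rcases lt_or_ge y m with hy | hy
  · exact absurd (lt_of_sweepParent_eq_some_of_lt hy h) (by omega)
  rw [sweepParent_node_left hy] at h
  split_ifs at h with h₁ h₂ h₃ h₄
  · exact ⟨hy, h₁⟩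
  · cases h; omega
  · obtain ⟨-, -, ⟨-, hup⟩ | ⟨hw, -⟩⟩ := keyParent_eq_some h
    · cases hup; omega
    · omega
  · rw [spineTop] at h; split_ifs at h; cases h; omega
  · obtain ⟨-, -, ⟨-, hup⟩ | ⟨hw, -⟩⟩ := keyParent_eq_some h
    · cases hup; omega
    · omega

theorem mem_left_of_reflTransGen {u : ℕ}
    (h : ReflTransGen (fun a b => sweepParent m ((A △ B) △ C) a = some b) u x)
    (hx₁ : m ≤ x) (hx₂ : x < m + A.numNodes) : m ≤ u ∧ u < m + A.numNodes := by
  induction h using ReflTransGen.head_induction_on with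
  | refl => exact ⟨hx₁, hx₂⟩
  | head hab _ ih => exact mem_left_of_sweepParent_eq_some hab ih.1 ih.2

theorem eq_rootKey_of_sweepParent_eq_some
    (h : sweepParent m ((A △ B) △ C) x = some (m + A.numNodes)) :
    (m ≤ x ∧ x < m + A.numNodes ∧ x = A.rootKey m) ∨
      (m + A.numNodes < x ∧ x < m + A.numNodes + B.numNodes + 1 ∧
        x = B.rootKey (m + A.numNodes + 1)) := by
  rcases lt_or_ge x m with hx | hx
  · exact absurd (lt_of_sweepParent_eq_some_of_lt hx h) (by omega)
  rw [sweepParent_node_left hx] at h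
  split_ifs at h with h₁ h₂ h₃ h₄
  · obtain ⟨-, -, ⟨hr, -⟩ | ⟨-, hw⟩⟩ := keyParent_eq_some h
    · exact .inl ⟨hx, h₁, hr⟩
    · omega
  · have := Option.some.inj h; omega
  · obtain ⟨-, -, ⟨hr, -⟩ | ⟨hw, -⟩⟩ := keyParent_eq_some h
    · exact .inr ⟨by omega, h₃, hr⟩
    · omega
  · rw [spineTop] at h; split_ifs at h; have := Option.some.inj h; omega
  · obtain ⟨-, -, ⟨-, hup⟩ | ⟨hw, -⟩⟩ := keyParent_eq_some h
    · have := Option.some.inj hup; omega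
    · omega

theorem reflTransGen_rootKey_right (hB : 0 < B.numNodes) :
    ReflTransGen (fun a b => sweepParent m ((A △ B) △ C) a = some b)
      (m + A.numNodes + B.numNodes) (B.rootKey (m + A.numNodes + 1)) := by
  refine reflTransGen_rootKey (up := some (m + A.numNodes)) (fun y w h => ?_) (by omega) (by omega)
  obtain ⟨hy₁, hy₂, -⟩ := keyParent_eq_some h
  rwa [sweepParent_node_left (by omega), if_neg (by omega), if_neg (by omega), if_pos (by omega)]

theorem isRotationAt_sweepTree_rotateRight (hn : m + ((A △ B) △ C).numNodes = n)
    (hn' : m + (A △ (B △ C)).numNodes = n) (hp : m + A.numNodes + B.numNodes + 1 < n)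
    (hc : m + A.numNodes < n) :
    IsRotationAt (SimpleGraph.pathGraph n) (sweepTree n m ((A △ B) △ C) hn)
      (sweepTree n m (A △ (B △ C)) hn') ⟨_, hp⟩ ⟨_, hc⟩ := by
  refine RTree.isRotationAt_pathGraph_of_parent_map (sweepTree_parent_map hn)
    (sweepTree_parent_map hn') rfl ?_ ?_ ?_ (fun x hxp hx => ?_) (fun x hxc hxp hx => ?_)
  · dsimp only
    rw [sweepParent_node_left (by omega), if_neg (by omega), if_pos rfl]
  · dsimp only
    rw [sweepParent_node_right (by omega), if_neg (by omega), if_pos rfl,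
      sweepParent_node_left (by omega), if_neg (by omega), if_neg (by omega), if_neg (by omega),
      if_pos rfl]
  · dsimp only
    rw [sweepParent_node_right (by omega), if_neg (by omega), if_neg (by omega), if_neg (by omega),
      if_pos rfl]
  · rcases eq_rootKey_of_sweepParent_eq_some hx with ⟨hx₁, hx₂, hxA⟩ | ⟨hx₁, hx₂, hxB⟩
    · refine .inr ⟨?_, fun u hu => ?_⟩
      · rw [sweepParent_node_left hx₁, if_pos hx₂] at hx
        rwa [sweepParent_node_right hx₁, if_pos hx₂]
      · have := mem_left_of_reflTransGen hu hx₁ hx₂; dsimp only; omega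
    · refine .inl ⟨?_, ⟨_, by omega⟩, hxB ▸ reflTransGen_rootKey_right (by omega), .inl (by simp)⟩
      rw [sweepParent_node_right (by omega), if_neg (by omega), if_neg (by omega), if_pos hx₂,
        hxB, keyParent_rootKey (ne_nil_of_numNodes_pos (by omega))]
  · have hxc' : x.val ≠ m + A.numNodes := fun h => hxc (Fin.ext h)
    have hxp' : x.val ≠ m + A.numNodes + B.numNodes + 1 := fun h => hxp (Fin.ext h)
    rcases lt_or_ge x.val m with hxm | hxm
    · exact sweepParent_eq_of_lt hxm _
    rw [sweepParent_node_left hxm] at hx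
    rw [sweepParent_node_left hxm, sweepParent_node_right hxm]
    split_ifs at hx ⊢
    · rfl
    · refine keyParent_up_of_ne_rootKey _ fun hxB => hx ?_
      rw [hxB, keyParent_rootKey (ne_nil_of_numNodes_pos (by omega))]
    · rfl

theorem isShallowRotation_rotateRight
    (hn : m + ((A △ B) △ C).numNodes = n) (hn' : m + (A △ (B △ C)).numNodes = n) :
    IsShallowRotation (SimpleGraph.pathGraph n) (sweepTree n m ((A △ B) △ C) hn)
      (sweepTree n m (A △ (B △ C)) hn') := by
  have hsize : m + A.numNodes + B.numNodes + C.numNodes + 2 = n := by simp at hn; omega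
  have hrot := isRotationAt_sweepTree_rotateRight hn hn' (by omega) (by omega)
  have hp := sweepTree_depth_le_two hn (v := ⟨m + A.numNodes + B.numNodes + 1, by omega⟩) <| by
    dsimp only
    rw [sweepParent_node_left (by omega), if_neg (by omega), if_neg (by omega), if_neg (by omega),
      if_pos rfl]
  exact ⟨_, _, hrot, by omega, (RTree.depth_le_succ_of_parent_eq hrot.1).trans (by omega)⟩

end RotateRight

section RotateLeft

variable {n m x y w : ℕ} {C : BinaryTree Unit}

theorem sweepParent_nil_node_self : sweepParent m (nil △ C) m = spineTop m := by
  simp [sweepParent_of_le, keyParent]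

theorem sweepParent_succ (hx₁ : x + 1 ≠ m) (hx₂ : x ≠ m) :
    sweepParent (m + 1) C x = sweepParent m (nil △ C) x := by
  rcases lt_or_ge x m with hxm | hxm
  · rw [sweepParent_of_lt (by omega), sweepParent_of_lt (by omega)]
  · rw [sweepParent_of_le (by omega), sweepParent_of_le hxm]
    simp [keyParent, spineTop, hx₂, show ¬ x < m by omega]

theorem le_of_sweepParent_nil_node_eq_some (h : sweepParent m (nil △ C) y = some w)
    (hw : m + 1 ≤ w) : m + 1 ≤ y := by
  rcases lt_or_ge y m with hy | hy
  · exact absurd (lt_of_sweepParent_eq_some_of_lt hy h) (by omega)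
  rcases hy.lt_or_eq with hy | rfl
  · exact hy
  · rw [sweepParent_nil_node_self, spineTop] at h; split_ifs at h; cases h; omega

theorem isRotationAt_sweepTree_rotateLeft (hm : m ≠ 0) (hn : m + (nil △ C).numNodes = n)
    (hn' : m + 1 + C.numNodes = n) (hp : m - 1 < n) (hc : m < n) :
    IsRotationAt (SimpleGraph.pathGraph n) (sweepTree n m (nil △ C) hn) (sweepTree n (m + 1) C hn')
      ⟨_, hp⟩ ⟨_, hc⟩ := by
  have hcp : sweepParent m (nil △ C) m = some (m - 1) := by
    rw [sweepParent_nil_node_self, spineTop, if_neg hm]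
  refine RTree.isRotationAt_pathGraph_of_parent_map (sweepTree_parent_map hn)
    (sweepTree_parent_map hn') rfl hcp ?_ ?_ (fun x _ hx => .inr ⟨?_, fun u hu => ?_⟩)
    (fun x hxc hxp _ => sweepParent_succ (fun h => hxp (Fin.ext (by simp; omega)))
      (fun h => hxc (Fin.ext h)))
  · dsimp only
    rw [sweepParent_of_succ_eq rfl, sweepParent_of_succ_eq (by omega)]
  · show sweepParent (m + 1) C (m - 1) = some m
    rw [sweepParent_of_lt (by omega)]; congr 1; omega
  all_goals
    dsimp only at hx ⊢
    have hxm : m + 1 ≤ x.val := by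
      rcases lt_or_ge x.val m with h | h
      · exact absurd (lt_of_sweepParent_eq_some_of_lt h hx) (lt_irrefl m)
      · rcases h.lt_or_eq with h | h
        · exact h
        · rw [← h, hcp] at hx; simp at hx; omega
  · rwa [sweepParent_succ (by omega) (by omega)]
  · have hum : m + 1 ≤ u := by
      induction hu using ReflTransGen.head_induction_on with
      | refl => exact hxm
      | head hab _ ih => exact le_of_sweepParent_nil_node_eq_some hab ih
    omega

theorem isShallowRotation_rotateLeft (hm : m ≠ 0)
    (hn : m + (nil △ C).numNodes = n) (hn' : m + 1 + C.numNodes = n) :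
    IsShallowRotation (SimpleGraph.pathGraph n) (sweepTree n m (nil △ C) hn)
      (sweepTree n (m + 1) C hn') := by
  have hrot := isRotationAt_sweepTree_rotateLeft hm hn hn' (by omega) (by omega)
  have hc := sweepTree_depth_le_two hn (v := ⟨m, by omega⟩) sweepParent_nil_node_self
  have hp := RTree.depth_le_one_of_parent_eq_none (T := sweepTree n m (nil △ C) hn)
    (v := ⟨m - 1, by omega⟩) <| Option.map_eq_none_iff.mp <| by
      rw [sweepTree_parent_map]; exact sweepParent_of_succ_eq (by dsimp only; omega)
  exact ⟨_, _, hrot, by omega, by omega⟩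

theorem sweepTree_zero_nil_node (hn : 0 + (nil △ C).numNodes = n)
    (hn' : 1 + C.numNodes = n) : sweepTree n 0 (nil △ C) hn = sweepTree n 1 C hn' := by
  refine RTree.ext_of_parent_map rfl fun v => ?_
  rw [sweepTree_parent_map, sweepTree_parent_map]
  rcases Nat.eq_zero_or_pos v.val with hv | hv
  · rw [hv, sweepParent_of_succ_eq rfl]; exact sweepParent_nil_node_self
  · exact (sweepParent_succ (by omega) (by omega)).symm

end RotateLeft

theorem rootSweep_sweepTree {n : ℕ} : ∀ (m : ℕ) (R : BinaryTree Unit) (hn : m + R.numNodes = n),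
    RootSweep (SimpleGraph.pathGraph n) (sweepTree n m R hn)
      (2 * R.numNodes - R.rightSpineLength) {x | m ≤ x.val + 1}
  | m, nil, hn => (rootSweep_zero _).mono le_rfl fun x hx => by
      have hmn : m = n := by simpa using hn
      simp only [Set.mem_ofPred_eq] at hx ⊢
      rw [sweepTree_isRoot_iff, sweepRoot, if_neg (by omega)]
      omega
  | 0, node _ nil C, hn => by
    rw [sweepTree_zero_nil_node hn (by simpa [add_comm] using hn)]
    exact (rootSweep_sweepTree 1 C _).mono (by simp [rightSpineLength]; omega) fun x _ => by simp
  | m + 1, node _ nil C, hn => by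
    have := C.rightSpineLength_le_numNodes
    refine ((rootSweep_sweepTree (m + 2) C (by simp at hn; omega)).cons
      (isShallowRotation_rotateLeft (by omega) hn _) fun x hx => ?_).mono
      (by simp [rightSpineLength]; omega) subset_rfl
    simp only [Set.mem_ofPred_eq] at hx ⊢
    rcases hx.lt_or_eq with hx | hx
    · exact .inl hx
    · exact .inr ((sweepTree_isRoot_iff hn).mpr (by simp [sweepRoot]; omega))
  | m, node _ (node _ A B) C, hn => by
    have := C.rightSpineLength_le_numNodes
    refine ((rootSweep_sweepTree m (A △ (B △ C)) (by simp at hn ⊢; omega)).cons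
      (isShallowRotation_rotateRight hn _) fun x hx => .inl hx).mono
      (by simp [rightSpineLength]; omega) subset_rfl
termination_by _ R => 2 * R.numNodes - R.rightSpineLength
decreasing_by
  all_goals
    have := C.rightSpineLength_le_numNodes
    simp [rightSpineLength]
    omega

/-- every BST admits a sequence of `O(n)` rotations, each involving only
nodes of depth at most 3, during which every node becomes the root at some point. -/
theorem bst_rotation_all_roots :
    ∃ c : ℝ, 0 < c ∧
      ∀ (n : ℕ) (T : RTree (Fin n)), IsSTG (SimpleGraph.pathGraph n) T →
        ∃ (k : ℕ) (f : ℕ → RTree (Fin n)),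
          (k : ℝ) ≤ c * n ∧ f 0 = T ∧
          (∀ i < k, ∃ p c' : Fin n,
            IsRotationAt (SimpleGraph.pathGraph n) (f i) (f (i+1)) p c' ∧
            (f i).depth p ≤ 3 ∧ (f i).depth c' ≤ 3) ∧
          (∀ x : Fin n, ∃ i ≤ k, (f i).IsRoot x) := by
  refine ⟨2, two_pos, fun n T hT => ?_⟩
  obtain ⟨R, hR, rfl⟩ := exists_eq_sweepTree hT
  obtain ⟨k, f, hk, hf0, hrot, hroot⟩ := rootSweep_sweepTree 0 R hR
  have : k ≤ 2 * n := by omega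
  exact ⟨k, f, by exact_mod_cast this, hf0, hrot, fun x => hroot x (Nat.zero_le _)⟩
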